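/- arXiv:1702.08287 — 5 statements merged into one kernel-verified Lean document; each statement's English description precedes it below -/
import Mathlib

section
/- For every EL-chart A and every b ∈ B = A ∖ (A + n), there exists exactly one non-negative integer c such that f(b) − c·n ∈ B. -/
namespace ELChart

/-- An EL-chart (for parameters `d`, `n` and `mfun τ = m_τ`): a non-empty subset
`A ⊆ ℤ^(d) = (ℤ/dℤ) × ℤ` which is bounded below and satisfies `f(A) ⊆ A` and `A + n ⊆ A`,
where `f (τ, x) = (τ + 1, x + m_τ)`. -/
def IsChart (d n : ℕ) (mfun : ZMod d → ℤ) (A : Set (ZMod d × ℤ)) : Prop :=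
  A.Nonempty ∧ (∃ c : ℤ, ∀ p ∈ A, c ≤ p.2) ∧
    (∀ p ∈ A, ((p.1 + 1 : ZMod d), p.2 + mfun p.1) ∈ A) ∧
    (∀ p ∈ A, (p.1, p.2 + (n : ℤ)) ∈ A)

/-- `B = A ∖ (A + n)`. -/
def Bset (d n : ℕ) (A : Set (ZMod d × ℤ)) : Set (ZMod d × ℤ) :=
  {p | p ∈ A ∧ (p.1, p.2 - (n : ℤ)) ∉ A}

/-- The shift `A + z` of a subset of `ℤ^(d)`. -/
def shift (d : ℕ) (A : Set (ZMod d × ℤ)) (z : ℤ) : Set (ZMod d × ℤ) :=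
  (fun p : ZMod d × ℤ => (p.1, p.2 + z)) '' A

/-- Two EL-charts are equivalent if they differ by a shift. -/
def ChartEquiv (d : ℕ) (A A' : Set (ZMod d × ℤ)) : Prop :=
  ∃ z : ℤ, shift d A z = A'

/-- The sequence `b 0, b 1, …` associated with an EL-chart: `b 0 = min B_(0)` and `b (i+1)`
is the unique element of `B` of the form `f (b i) − c * n` with `c` a non-negative integer. -/
noncomputable def bseq (d n : ℕ) (mfun : ZMod d → ℤ) (A : Set (ZMod d × ℤ)) :
    ℕ → ZMod d × ℤ
  | 0 => ((0 : ZMod d), sInf {x : ℤ | ((0 : ZMod d), x) ∈ Bset d n A})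
  | i + 1 =>
    ((bseq d n mfun A i).1 + 1,
      sInf {y : ℤ | ((bseq d n mfun A i).1 + 1, y) ∈ Bset d n A ∧
        ((bseq d n mfun A i).2 + mfun (bseq d n mfun A i).1 - y) % (n : ℤ) = 0 ∧
        y ≤ (bseq d n mfun A i).2 + mfun (bseq d n mfun A i).1})

/-- The entry `μ'_k` (for `1 ≤ k ≤ d*n`) of the type of an EL-chart: the non-negative integer
with `b k = f (b (k-1)) − μ'_k * n`. -/
noncomputable def typeInt (d n : ℕ) (mfun : ZMod d → ℤ) (A : Set (ZMod d × ℤ)) (k : ℕ) : ℤ :=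
  ((bseq d n mfun A (k - 1)).2 + mfun (bseq d n mfun A (k - 1)).1
    - (bseq d n mfun A k).2) / (n : ℤ)

/-- The type of an EL-chart as a tuple: `μ'_{τ,i} = μ'_{τ + (i−1)d}` where the `Fin d`-index
`τ` corresponds to `τ + 1 ∈ {1, …, d}` and the `Fin n`-index `i` to `i + 1 ∈ {1, …, n}`. -/
noncomputable def typeTup (d n : ℕ) (mfun : ZMod d → ℤ) (A : Set (ZMod d × ℤ)) :
    Fin d → Fin n → ℤ :=
  fun τ i => typeInt d n mfun A (τ.val + 1 + i.val * d)

/-- The entry `μ'_{τ',i'}` of the type of an EL-chart attached to an element `p = b_{τ',i'}`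
of `B`: if `q ∈ B` is the (unique) predecessor of `p`, i.e. the element with
`p = f q − c * n` for a non-negative integer `c`, then `muOf p = c`. -/
noncomputable def muOf (d n : ℕ) (mfun : ZMod d → ℤ) (A : Set (ZMod d × ℤ))
    (p : ZMod d × ℤ) : ℤ :=
  (sInf {y : ℤ | ((p.1 - 1 : ZMod d), y) ∈ Bset d n A ∧
      (y + mfun (p.1 - 1) - p.2) % (n : ℤ) = 0 ∧ p.2 ≤ y + mfun (p.1 - 1)}
    + mfun (p.1 - 1) - p.2) / (n : ℤ)

/-- The `i`-th largest element `b̃_{τ,i}` of `B_(τ)` (1-indexed: `i ∈ {1, …, n}`): the unique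
element of `B_(τ)` with exactly `i − 1` elements of `B_(τ)` above it. -/
noncomputable def btilde (d n : ℕ) (A : Set (ZMod d × ℤ)) (τ : ZMod d) (i : ℕ) : ℤ :=
  sInf {y : ℤ | (τ, y) ∈ Bset d n A ∧
    Set.ncard {z : ℤ | (τ, z) ∈ Bset d n A ∧ y < z} = i - 1}

/-- The cotype of an EL-chart as a tuple: `μ̃_{τ,i} = μ'_{τ',i'}` where `b̃_{τ,i} = b_{τ',i'}`,
i.e. the type entry attached to the `i`-th largest element of `B_(τ)`. -/
noncomputable def cotypeTup (d n : ℕ) (mfun : ZMod d → ℤ) (A : Set (ZMod d × ℤ)) :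
    Fin d → Fin n → ℤ :=
  fun τ i =>
    muOf d n mfun A (((τ.val + 1 : ℕ) : ZMod d),
      btilde d n A ((τ.val + 1 : ℕ) : ZMod d) (i.val + 1))

/-- Membership in `P_{m,n,d}`: all entries are non-negative and
`Σ_{i=1}^k Σ_{τ=1}^d μ_{τ,i} ≤ k*m/n` for `k = 1, …, n`, with equality for `k = n`. -/
def memP (d n m : ℕ) (μ : Fin d → Fin n → ℤ) : Prop :=
  (∀ τ i, 0 ≤ μ τ i) ∧
    (∀ k : ℕ, 1 ≤ k → k ≤ n →
      (n : ℤ) * ∑ τ : Fin d, ∑ i : Fin n, (if i.val + 1 ≤ k then μ τ i else 0)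
        ≤ (k : ℤ) * (m : ℤ)) ∧
    (∑ τ : Fin d, ∑ i : Fin n, μ τ i) = (m : ℤ)

/-- An EL-chart is normalised if `Σ_{b ∈ B_(0)} |b| = n(n−1)/2`. -/
def IsNormalised (d n : ℕ) (A : Set (ZMod d × ℤ)) : Prop :=
  ∑ᶠ x ∈ {x : ℤ | ((0 : ZMod d), x) ∈ Bset d n A}, x = ((n * (n - 1) / 2 : ℕ) : ℤ)

/-- The dominant rearrangement of a tuple: each component is sorted weakly decreasingly. -/
def domOf (d n : ℕ) (μ : Fin d → Fin n → ℤ) : Fin d → Fin n → ℤ :=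
  fun τ i => μ τ (Tuple.sort (fun j => -(μ τ j)) i)

/-- A tuple is dominant if each of its `d` components is weakly decreasing. -/
def IsDom (d n : ℕ) (μ : Fin d → Fin n → ℤ) : Prop :=
  ∀ τ : Fin d, ∀ i j : Fin n, i ≤ j → μ τ j ≤ μ τ i

end ELChart

open ELChart

/-! Since `A + n ⊆ A`, the `c : ℕ` with `f b - c * n ∈ A` form an initial segment of `ℕ`, which
contains `0` because `f b ∈ A` and is finite because `A` is bounded below. An element
`f b - c * n` lies in `B` exactly when `c` is the last element of this segment. -/

namespace ELChart

theorem existsUnique_boundary_of_antitone {P : ℕ → Prop} (hP : Antitone P) (h0 : P 0)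
    (hfin : ∃ c, ¬ P c) : ∃! c, P c ∧ ¬ P (c + 1) := by
  classical
  have hpos : 0 < Nat.find hfin := Nat.pos_of_ne_zero fun h => (h ▸ Nat.find_spec hfin) h0
  refine ⟨Nat.find hfin - 1, ⟨?_, ?_⟩, ?_⟩
  · exact not_not.1 (Nat.find_min hfin (by omega))
  · rw [Nat.sub_add_cancel hpos]
    exact Nat.find_spec hfin
  · rintro c ⟨hc, hc_succ⟩
    have hle : Nat.find hfin ≤ c + 1 := Nat.find_min' hfin hc_succ
    have hlt : c < Nat.find hfin := lt_of_not_ge fun h => Nat.find_spec hfin (hP h hc)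
    omega

theorem existsUnique_sub_mul_mem_sub_not_mem {S : Set ℤ} {n : ℕ} (hn : 0 < n)
    (hS : ∀ x ∈ S, x + n ∈ S) (hbdd : BddBelow S) {y : ℤ} (hy : y ∈ S) :
    ∃! c : ℕ, y - c * n ∈ S ∧ y - c * n - n ∉ S := by
  obtain ⟨lb, hlb⟩ := hbdd
  have hanti : Antitone fun c : ℕ => y - c * n ∈ S := antitone_nat_of_succ_le fun c hc => by
    simpa only [Nat.cast_succ, add_mul, one_mul, sub_add_eq_sub_sub, sub_add_cancel] using
      hS _ hc
  have hfin : ∃ c : ℕ, y - c * n ∉ S := by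
    refine ⟨(y - lb).toNat + 1, fun hmem => ?_⟩
    have hlb' : lb ≤ y - ((y - lb).toNat + 1 : ℕ) * n := hlb hmem
    have hn' : (1 : ℤ) ≤ n := by exact_mod_cast hn
    have hy_lb : y - lb ≤ (y - lb).toNat := Int.self_le_toNat _
    push_cast at hlb'
    nlinarith
  simpa only [Nat.cast_succ, add_mul, one_mul, sub_add_eq_sub_sub] using
    existsUnique_boundary_of_antitone hanti (by simpa using hy) hfin

end ELChart

theorem exists_unique_step_general
    (d n : ℕ) (hn : 0 < n)
    (mfun : ZMod d → ℤ)
    (A : Set (ZMod d × ℤ)) (hA : IsChart d n mfun A)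
    (b : ZMod d × ℤ) (hb : b ∈ Bset d n A) :
    ∃! c : ℕ, ((b.1 + 1 : ZMod d), b.2 + mfun b.1 - (c : ℤ) * (n : ℤ)) ∈ Bset d n A := by
  obtain ⟨-, ⟨lb, hlb⟩, hf, hshift⟩ := hA
  exact existsUnique_sub_mul_mem_sub_not_mem (S := {x | (b.1 + 1, x) ∈ A}) hn
    (fun x hx => hshift _ hx) ⟨lb, fun x hx => hlb _ hx⟩ (hf b hb.1)

/-- For every EL-chart `A` and every `b ∈ B = A ∖ (A + n)`, there exists
exactly one non-negative integer `c` such that `f b − c * n ∈ B`. -/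
theorem exists_unique_step
    (d n m : ℕ) [NeZero d] (hn : 0 < n) (hm : 0 < m) (hmn : Nat.Coprime m n)
    (mfun : ZMod d → ℤ) (hsum : ∑ τ : ZMod d, mfun τ = (m : ℤ))
    (A : Set (ZMod d × ℤ)) (hA : IsChart d n mfun A)
    (b : ZMod d × ℤ) (hb : b ∈ Bset d n A) :
    ∃! c : ℕ, ((b.1 + 1 : ZMod d), b.2 + mfun b.1 - (c : ℤ) * (n : ℤ)) ∈ Bset d n A :=
  exists_unique_step_general d n hn mfun A hA b hb
end

section
/- Let A be an EL-chart and b_0, b_1, …, b_{dn} the associated sequence (b_0 = min B_(0), and b_{i+1} the unique element of B of the form f(b_i) − μ'_{i+1}·n with μ'_{i+1} a non-negative integer). Then the elements b_0, b_1, …, b_{dn−1} are pairwise distinct; consequently {b_0,…,b_{dn−1}} = B and b_{dn} = b_0. -/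
/-! Since `A + n ⊆ A`, two elements of `B` in the same class whose values are congruent mod `n`
coincide. Hence `B` has at most `d * n` elements and the step `b i ↦ b (i + 1)` can be undone, so
a repetition in the sequence yields a return `b k = b 0` with `k > 0`. Then `d ∣ k`, say
`k = d * q`, and reducing the values mod `n` gives `n ∣ q * m`, so `n ∣ q` by coprimality and
`k ≥ d * n`. Thus `b 0, …, b (d * n - 1)` are distinct elements of `B`, they exhaust `B`, and
`b (d * n)` can only be `b 0`. -/

namespace ELChart

open Finset

theorem sum_range_mul_natCast {M : Type*} [AddCommMonoid M] (d : ℕ) [NeZero d]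
    (f : ZMod d → M) (q : ℕ) :
    ∑ i ∈ range (d * q), f i = q • ∑ τ, f τ := by
  have hperiod : ∑ i ∈ range d, f i = ∑ τ, f τ := by
    refine sum_nbij' (↑) ZMod.val ?_ ?_ ?_ ?_ ?_ <;>
      simp +contextual [ZMod.val_lt, Nat.mod_eq_of_lt]
  induction q with
  | zero => simp
  | succ q ih =>
    rw [Nat.mul_succ, sum_range_add, ih, succ_nsmul]
    simp [hperiod]

theorem image_Iio_eq_of_injOn {α : Type*} {s : Set α} {b : ℕ → α} {N : ℕ}
    (hs : s.Finite) (hcard : s.ncard ≤ N) (hmem : ∀ i, b i ∈ s) (hinj : Set.InjOn b (Set.Iio N)) :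
    b '' Set.Iio N = s := by
  refine Set.eq_of_subset_of_ncard_le (Set.image_subset_iff.2 fun i _ => hmem i) ?_ hs
  rwa [hinj.ncard_image, Set.ncard_Iio_nat]

section Chart

variable {d n : ℕ} {A : Set (ZMod d × ℤ)}

theorem add_mul_mem (hplus : ∀ p ∈ A, (p.1, p.2 + (n : ℤ)) ∈ A) {τ : ZMod d} {x : ℤ}
    (hx : (τ, x) ∈ A) (k : ℕ) : (τ, x + k * n) ∈ A := by
  induction k with
  | zero => simpa using hx
  | succ k ih => simpa [add_mul, add_assoc] using hplus _ ih

theorem eq_of_mem_Bset_of_modEq (hplus : ∀ p ∈ A, (p.1, p.2 + (n : ℤ)) ∈ A) {τ : ZMod d}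
    {x y : ℤ} (hx : (τ, x) ∈ Bset d n A) (hy : (τ, y) ∈ Bset d n A) (hxy : x ≡ y [ZMOD n]) :
    x = y := by
  wlog hle : x ≤ y generalizing x y
  · exact (this hy hx hxy.symm (le_of_not_ge hle)).symm
  obtain ⟨t, ht⟩ := Int.modEq_iff_dvd.1 hxy
  by_contra hne
  have htpos : 0 < t :=
    pos_of_mul_pos_right (ht ▸ sub_pos.2 (lt_of_le_of_ne hle hne)) n.cast_nonneg
  obtain ⟨k, rfl⟩ : ∃ k : ℕ, t = k + 1 := ⟨(t - 1).toNat, by omega⟩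
  refine hy.2 ?_
  convert add_mul_mem hplus hx.1 k using 2
  linear_combination ht

theorem injOn_Bset (hplus : ∀ p ∈ A, (p.1, p.2 + (n : ℤ)) ∈ A) :
    Set.InjOn (fun p : ZMod d × ℤ => (p.1, (p.2 : ZMod n))) (Bset d n A) := by
  rintro ⟨τ, x⟩ hx ⟨τ', y⟩ hy h
  obtain ⟨rfl, hxy⟩ := Prod.ext_iff.1 h
  exact Prod.ext rfl
    (eq_of_mem_Bset_of_modEq hplus hx hy ((ZMod.intCast_eq_intCast_iff _ _ _).1 hxy))

variable [NeZero d] [NeZero n]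

theorem finite_Bset (hplus : ∀ p ∈ A, (p.1, p.2 + (n : ℤ)) ∈ A) : (Bset d n A).Finite :=
  Set.Finite.of_finite_image (Set.toFinite _) (injOn_Bset hplus)

theorem ncard_Bset_le (hplus : ∀ p ∈ A, (p.1, p.2 + (n : ℤ)) ∈ A) :
    (Bset d n A).ncard ≤ d * n := by
  calc (Bset d n A).ncard ≤ (Set.univ : Set (ZMod d × ZMod n)).ncard :=
        Set.ncard_le_ncard_of_injOn _ (fun _ _ => Set.mem_univ _) (injOn_Bset hplus)
          Set.finite_univ
    _ = d * n := by simp [Set.ncard_univ]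

end Chart

section Sequence

variable {d n : ℕ} {mfun : ZMod d → ℤ} {A : Set (ZMod d × ℤ)} {b : ℕ → ZMod d × ℤ}

theorem fst_eq_natCast (h0 : (b 0).1 = 0) (hfst : ∀ i, (b (i + 1)).1 = (b i).1 + 1) (i : ℕ) :
    (b i).1 = i := by
  induction i with
  | zero => simpa using h0
  | succ i ih => rw [hfst, ih, Nat.cast_succ]

theorem snd_modEq_sum (hcls : ∀ i, (b i).1 = i)
    (hsnd : ∀ i, (b (i + 1)).2 ≡ (b i).2 + mfun (b i).1 [ZMOD n]) (k : ℕ) :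
    (b k).2 ≡ (b 0).2 + ∑ i ∈ range k, mfun i [ZMOD n] := by
  induction k with
  | zero => simp [Int.ModEq.refl]
  | succ k ih =>
    rw [sum_range_succ, ← add_assoc, ← hcls k]
    exact (hsnd k).trans (ih.add_right _)

theorem eq_of_succ_eq (hplus : ∀ p ∈ A, (p.1, p.2 + (n : ℤ)) ∈ A)
    (hmem : ∀ i, b i ∈ Bset d n A) (hfst : ∀ i, (b (i + 1)).1 = (b i).1 + 1)
    (hsnd : ∀ i, (b (i + 1)).2 ≡ (b i).2 + mfun (b i).1 [ZMOD n]) {p q : ℕ}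
    (h : b (p + 1) = b (q + 1)) : b p = b q := by
  have h1 : (b p).1 = (b q).1 := add_right_cancel (by rw [← hfst, ← hfst, h])
  refine Prod.ext h1 (eq_of_mem_Bset_of_modEq hplus (hmem p) (h1 ▸ hmem q) ?_)
  refine Int.ModEq.add_right_cancel' (mfun (b p).1) ?_
  calc (b p).2 + mfun (b p).1 ≡ (b (p + 1)).2 [ZMOD n] := (hsnd p).symm
    _ = (b (q + 1)).2 := by rw [h]
    _ ≡ (b q).2 + mfun (b p).1 [ZMOD n] := h1 ▸ hsnd q

theorem eq_of_add_eq (hplus : ∀ p ∈ A, (p.1, p.2 + (n : ℤ)) ∈ A)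
    (hmem : ∀ i, b i ∈ Bset d n A) (hfst : ∀ i, (b (i + 1)).1 = (b i).1 + 1)
    (hsnd : ∀ i, (b (i + 1)).2 ≡ (b i).2 + mfun (b i).1 [ZMOD n]) {p q : ℕ} (k : ℕ)
    (h : b (p + k) = b (q + k)) : b p = b q := by
  induction k with
  | zero => exact h
  | succ k ih => exact ih (eq_of_succ_eq hplus hmem hfst hsnd h)

theorem mul_le_of_apply_eq_apply_zero [NeZero d] {m : ℕ} (hmn : Nat.Coprime m n)
    (hsum : ∑ τ : ZMod d, mfun τ = (m : ℤ)) (hcls : ∀ i, (b i).1 = i)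
    (hsnd : ∀ i, (b (i + 1)).2 ≡ (b i).2 + mfun (b i).1 [ZMOD n]) {k : ℕ} (hk : 0 < k)
    (h : b k = b 0) : d * n ≤ k := by
  obtain ⟨q, rfl⟩ : d ∣ k := by
    rw [← ZMod.natCast_eq_zero_iff, ← hcls, h, hcls, Nat.cast_zero]
  have hq : 0 < q := Nat.pos_of_mul_pos_left hk
  have hqm : (0 : ℤ) ≡ q * m [ZMOD n] := by
    refine Int.ModEq.add_left_cancel' (b 0).2 ?_
    simpa [h, sum_range_mul_natCast, hsum] using snd_modEq_sum hcls hsnd (d * q)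
  have hnq : n ∣ q * m := by exact_mod_cast Int.modEq_zero_iff_dvd.1 hqm.symm
  exact Nat.mul_le_mul_left d (Nat.le_of_dvd hq (hmn.symm.dvd_of_dvd_mul_right hnq))

end Sequence

end ELChart

open ELChart

theorem bseq_injective_and_exhausts_general
    (d n m : ℕ) [NeZero d] (hn : 0 < n) (hmn : Nat.Coprime m n)
    (mfun : ZMod d → ℤ) (hsum : ∑ τ : ZMod d, mfun τ = (m : ℤ))
    (A : Set (ZMod d × ℤ)) (hA : IsChart d n mfun A)
    (b : ℕ → ZMod d × ℤ)
    (hb0mem : b 0 ∈ Bset d n A) (hb0cls : (b 0).1 = 0)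
    (hrec : ∀ i : ℕ, b (i + 1) ∈ Bset d n A ∧
      ∃ c : ℕ, b (i + 1) = ((b i).1 + 1, (b i).2 + mfun (b i).1 - (c : ℤ) * (n : ℤ))) :
    (∀ i j : ℕ, i < d * n → j < d * n → b i = b j → i = j) ∧
    {p : ZMod d × ℤ | ∃ i : ℕ, i < d * n ∧ b i = p} = Bset d n A ∧
    b (d * n) = b 0 := by
  obtain ⟨-, -, -, hplus⟩ := hA
  have : NeZero n := ⟨hn.ne'⟩
  have hmem : ∀ i, b i ∈ Bset d n A
    | 0 => hb0mem
    | i + 1 => (hrec i).1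
  have hfst : ∀ i, (b (i + 1)).1 = (b i).1 + 1 := fun i => by rw [(hrec i).2.choose_spec]
  have hsnd : ∀ i, (b (i + 1)).2 ≡ (b i).2 + mfun (b i).1 [ZMOD n] := fun i => by
    rw [(hrec i).2.choose_spec, Int.modEq_iff_dvd]
    exact ⟨(hrec i).2.choose, by ring⟩
  have hreturn : ∀ i k, 0 < k → b (i + k) = b i → d * n ≤ k := fun i k hk h =>
    mul_le_of_apply_eq_apply_zero hmn hsum (fst_eq_natCast hb0cls hfst) hsnd hk
      (eq_of_add_eq hplus hmem hfst hsnd i (by rwa [zero_add, add_comm]))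
  have hinj : Set.InjOn b (Set.Iio (d * n)) := by
    intro i (hi : i < d * n) j (hj : j < d * n) h
    by_contra hne
    rcases Nat.lt_or_gt_of_ne hne with hij | hji
    · have := hreturn i (j - i) (by omega) (by rw [Nat.add_sub_cancel' hij.le, h]); omega
    · have := hreturn j (i - j) (by omega) (by rw [Nat.add_sub_cancel' hji.le, h]); omega
  have himage : b '' Set.Iio (d * n) = Bset d n A :=
    image_Iio_eq_of_injOn (finite_Bset hplus) (ncard_Bset_le hplus) hmem hinj
  refine ⟨fun i j hi hj => hinj hi hj, himage, ?_⟩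
  obtain ⟨j, hj : j < d * n, hbj⟩ := himage.symm ▸ hmem (d * n)
  have := hreturn j (d * n - j) (by omega) (by rw [Nat.add_sub_cancel' hj.le, hbj])
  obtain rfl : j = 0 := by omega
  exact hbj.symm

/-- Let `A` be an EL-chart and `b 0, b 1, …, b (d*n)` the associated sequence
(`b 0 = min B_(0)`, and `b (i+1)` the unique element of `B` of the form `f (b i) − c * n` with
`c` a non-negative integer).  Then `b 0, …, b (d*n − 1)` are pairwise distinct; consequently
`{b 0, …, b (d*n − 1)} = B` and `b (d*n) = b 0`. -/
theorem bseq_injective_and_exhausts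
    (d n m : ℕ) [NeZero d] (hn : 0 < n) (hm : 0 < m) (hmn : Nat.Coprime m n)
    (mfun : ZMod d → ℤ) (hsum : ∑ τ : ZMod d, mfun τ = (m : ℤ))
    (A : Set (ZMod d × ℤ)) (hA : IsChart d n mfun A)
    (b : ℕ → ZMod d × ℤ)
    (hb0mem : b 0 ∈ Bset d n A) (hb0cls : (b 0).1 = 0)
    (hb0min : ∀ x : ℤ, ((0 : ZMod d), x) ∈ Bset d n A → (b 0).2 ≤ x)
    (hrec : ∀ i : ℕ, b (i + 1) ∈ Bset d n A ∧
      ∃ c : ℕ, b (i + 1) = ((b i).1 + 1, (b i).2 + mfun (b i).1 - (c : ℤ) * (n : ℤ))) :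
    (∀ i j : ℕ, i < d * n → j < d * n → b i = b j → i = j) ∧
    {p : ZMod d × ℤ | ∃ i : ℕ, i < d * n ∧ b i = p} = Bset d n A ∧
    b (d * n) = b 0 :=
  bseq_injective_and_exhausts_general d n m hn hmn mfun hsum A hA b hb0mem hb0cls hrec
end

section
/- For every EL-chart A, the type of A lies in P_{m,n,d}, i.e. the type μ' = (μ'_{τ,i}) satisfies μ'_{τ,i} ≥ 0 for all τ, i, and Σ_{i=1}^k Σ_{τ=1}^d μ'_{τ,i} ≤ km/n for every k = 1,…,n, with equality for k = n. -/
open ELChart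
open ELChart

/-!
From `b_k`, the walk applies `f` and then descends in steps of `n` to the unique element of `B`
in that residue class; this costs `n μ'_{k+1}`. Telescoping,
`n (μ'_1 + ⋯ + μ'_{kd}) = b_0 + k m − b_{kd}`. As `b_{kd}` lies in `B_(0)`, whose minimum is `b_0`,
this is at most `k m`. For `k = n` it shows `b_{nd} ≡ b_0 (mod n)`, and since `B_(0)` meets each
residue class mod `n` only once, `b_{nd} = b_0`, giving equality.
-/

namespace ELChart

open Finset

section ResidueClass

variable {d n : ℕ} {A : Set (ZMod d × ℤ)}

lemma add_nat_mul_mem (hshift : ∀ p ∈ A, (p.1, p.2 + (n : ℤ)) ∈ A) (k : ℕ)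
    {p : ZMod d × ℤ} (hp : p ∈ A) : (p.1, p.2 + k * n) ∈ A := by
  induction k with
  | zero => simpa using hp
  | succ k ih =>
    convert hshift _ ih using 2
    push_cast
    ring

lemma mem_of_le_of_dvd (hshift : ∀ p ∈ A, (p.1, p.2 + (n : ℤ)) ∈ A) (hn : 0 < n)
    {τ : ZMod d} {x y : ℤ} (hx : (τ, x) ∈ A) (hxy : x ≤ y) (hdvd : (n : ℤ) ∣ y - x) :
    (τ, y) ∈ A := by
  obtain ⟨c, hc⟩ := hdvd
  have hc0 : 0 ≤ c := by
    by_contra! hneg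
    nlinarith [show (0 : ℤ) < n from mod_cast hn]
  lift c to ℕ using hc0
  convert add_nat_mul_mem hshift c hx using 2
  linarith

lemma eq_of_mem_Bset_of_dvd (hshift : ∀ p ∈ A, (p.1, p.2 + (n : ℤ)) ∈ A) (hn : 0 < n)
    {τ : ZMod d} {y y' : ℤ} (hy : (τ, y) ∈ Bset d n A) (hy' : (τ, y') ∈ Bset d n A)
    (hdvd : (n : ℤ) ∣ y - y') : y = y' := by
  have key : ∀ {a b : ℤ}, (τ, a) ∈ Bset d n A → (τ, b) ∈ Bset d n A → (n : ℤ) ∣ a - b →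
      a ≤ b := by
    intro a b ha hb hab
    by_contra! hba
    have hle : (n : ℤ) ≤ a - b := Int.le_of_dvd (by omega) hab
    refine ha.2 (mem_of_le_of_dvd hshift hn hb.1 (by omega) ?_)
    rw [sub_right_comm]
    exact dvd_sub hab dvd_rfl
  exact le_antisymm (key hy hy' hdvd) (key hy' hy (dvd_sub_comm.mp hdvd))

lemma exists_mem_Bset_le_dvd (hbdd : ∃ c, ∀ p ∈ A, c ≤ p.2) (hn : 0 < n)
    {τ : ZMod d} {t : ℤ} (ht : (τ, t) ∈ A) :
    ∃ g, (τ, g) ∈ Bset d n A ∧ g ≤ t ∧ (n : ℤ) ∣ t - g := by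
  set C := {x : ℤ | (τ, x) ∈ A ∧ (n : ℤ) ∣ t - x}
  obtain ⟨c, hc⟩ := hbdd
  have hCbdd : BddBelow C := ⟨c, fun x hx => hc _ hx.1⟩
  have htC : t ∈ C := ⟨ht, by simp⟩
  obtain ⟨hmem, hdvd⟩ : sInf C ∈ C := Int.csInf_mem ⟨t, htC⟩ hCbdd
  refine ⟨sInf C, ⟨hmem, fun hbelow => ?_⟩, csInf_le hCbdd htC, hdvd⟩
  have hbelowC : sInf C - n ∈ C := ⟨hbelow, by rw [← sub_add]; exact dvd_add hdvd dvd_rfl⟩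
  have := csInf_le hCbdd hbelowC
  omega

lemma exists_mem_Bset_eq_sInf (hbdd : ∃ c, ∀ p ∈ A, c ≤ p.2)
    (hshift : ∀ p ∈ A, (p.1, p.2 + (n : ℤ)) ∈ A) (hn : 0 < n)
    {τ : ZMod d} {t : ℤ} (ht : (τ, t) ∈ A) :
    ∃ g, (τ, g) ∈ Bset d n A ∧ g ≤ t ∧ (n : ℤ) ∣ t - g ∧
      sInf {y : ℤ | (τ, y) ∈ Bset d n A ∧ (t - y) % (n : ℤ) = 0 ∧ y ≤ t} = g := by
  obtain ⟨g, hgB, hgt, hdvd⟩ := exists_mem_Bset_le_dvd hbdd hn ht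
  refine ⟨g, hgB, hgt, hdvd, ?_⟩
  convert csInf_singleton g
  ext y
  refine ⟨fun ⟨hyB, hy, _⟩ => ?_, fun hy => ?_⟩
  · refine eq_of_mem_Bset_of_dvd hshift hn hyB hgB ?_
    rw [← sub_sub_sub_cancel_left g y t]
    exact dvd_sub hdvd (Int.dvd_of_emod_eq_zero hy)
  · rw [Set.mem_singleton_iff.mp hy]
    exact ⟨hgB, Int.emod_eq_zero_of_dvd hdvd, hgt⟩

end ResidueClass

lemma sum_range_sum_range_add_mul {M : Type*} [AddCommMonoid M] (F : ℕ → M) (d k : ℕ) :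
    ∑ i ∈ range k, ∑ τ ∈ range d, F (τ + i * d) = ∑ j ∈ range (k * d), F j := by
  induction k with
  | zero => simp
  | succ k ih =>
    rw [sum_range_succ, ih, add_mul, one_mul, sum_range_add]
    simp only [add_comm]

lemma sum_fin_sum_fin_ite_le {M : Type*} [AddCommMonoid M] (F : ℕ → M) {d n k : ℕ}
    (hk : k ≤ n) :
    ∑ τ : Fin d, ∑ i : Fin n, (if i.val + 1 ≤ k then F (τ.val + 1 + i.val * d) else 0)
      = ∑ j ∈ range (k * d), F (j + 1) := by
  have hfilter : (range n).filter (fun i => i + 1 ≤ k) = range k := by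
    ext i; simp only [mem_filter, mem_range]; omega
  rw [sum_comm, ← sum_range_sum_range_add_mul, ← hfilter, sum_filter]
  simp only [sum_ite_irrel, sum_const_zero, Nat.add_right_comm]
  rw [← Fin.sum_univ_eq_sum_range
    (fun i => if i + 1 ≤ k then ∑ τ ∈ range d, F (τ + i * d + 1) else 0)]
  refine sum_congr rfl fun i _ => ?_
  rw [Fin.sum_univ_eq_sum_range (fun τ => F (τ + i * d + 1))]

lemma sum_range_natCast_zmod {M : Type*} [AddCommMonoid M] {d : ℕ} [NeZero d]
    (f : ZMod d → M) :
    ∑ j ∈ range d, f j = ∑ τ, f τ :=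
  sum_nbij' (↑) ZMod.val (fun _ _ => mem_univ _) (fun a _ => mem_range.mpr (ZMod.val_lt a))
    (fun _ ha => ZMod.val_cast_of_lt (mem_range.mp ha)) (fun a _ => ZMod.natCast_zmod_val a)
    (fun _ _ => rfl)

lemma sum_range_mul_natCast_zmod {M : Type*} [AddCommMonoid M] {d : ℕ} [NeZero d]
    (f : ZMod d → M) (k : ℕ) :
    ∑ j ∈ range (k * d), f j = k • ∑ τ, f τ := by
  induction k with
  | zero => simp
  | succ k ih =>
    rw [add_mul, one_mul, sum_range_add, ih, succ_nsmul, ← sum_range_natCast_zmod]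
    simp

section Walk

variable {d n : ℕ} {mfun : ZMod d → ℤ} {A : Set (ZMod d × ℤ)}

lemma IsChart.exists_mem_column [NeZero d] (hA : IsChart d n mfun A) (τ : ZMod d) :
    ∃ x, (τ, x) ∈ A := by
  obtain ⟨⟨σ, x⟩, hp⟩ := hA.1
  have hreach : ∀ j : ℕ, ∃ y, (σ + j, y) ∈ A := by
    intro j
    induction j with
    | zero => exact ⟨x, by simpa using hp⟩
    | succ j ih =>
      obtain ⟨y, hy⟩ := ih
      exact ⟨_, by simpa [add_assoc] using hA.2.2.1 _ hy⟩
  obtain ⟨y, hy⟩ := hreach (τ - σ).val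
  exact ⟨y, by rwa [ZMod.natCast_zmod_val, add_sub_cancel] at hy⟩

@[simp]
lemma bseq_fst (k : ℕ) : (bseq d n mfun A k).1 = k := by
  induction k with
  | zero => simp [bseq]
  | succ k ih => simp [bseq, ih]

lemma IsChart.bseq_zero_mem_Bset [NeZero d] (hA : IsChart d n mfun A) (hn : 0 < n) :
    bseq d n mfun A 0 ∈ Bset d n A := by
  obtain ⟨c, hc⟩ := hA.2.1
  obtain ⟨t, ht⟩ := hA.exists_mem_column 0
  obtain ⟨g, hg, -⟩ := exists_mem_Bset_le_dvd hA.2.1 hn ht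
  have hbdd : BddBelow {x : ℤ | ((0 : ZMod d), x) ∈ Bset d n A} := ⟨c, fun x hx => hc _ hx.1⟩
  exact Int.csInf_mem ⟨g, hg⟩ hbdd

lemma IsChart.bseq_succ_spec (hA : IsChart d n mfun A) (hn : 0 < n) {k : ℕ}
    (hk : bseq d n mfun A k ∈ A) :
    bseq d n mfun A (k + 1) ∈ Bset d n A ∧
      (bseq d n mfun A (k + 1)).2 ≤ (bseq d n mfun A k).2 + mfun k ∧
      (n : ℤ) ∣ (bseq d n mfun A k).2 + mfun k - (bseq d n mfun A (k + 1)).2 := by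
  obtain ⟨g, hgB, hgt, hdvd, hg⟩ := exists_mem_Bset_eq_sInf hA.2.1 hA.2.2.2 hn (hA.2.2.1 _ hk)
  have hsucc : bseq d n mfun A (k + 1) = ((bseq d n mfun A k).1 + 1, g) := by
    rw [← hg]
    rfl
  rw [hsucc]
  simp only [bseq_fst] at hgt hdvd
  exact ⟨hgB, hgt, hdvd⟩

lemma IsChart.bseq_mem_Bset [NeZero d] (hA : IsChart d n mfun A) (hn : 0 < n) (k : ℕ) :
    bseq d n mfun A k ∈ Bset d n A := by
  induction k with
  | zero => exact hA.bseq_zero_mem_Bset hn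
  | succ k ih => exact (hA.bseq_succ_spec hn ih.1).1

lemma IsChart.mul_typeInt_succ [NeZero d] (hA : IsChart d n mfun A) (hn : 0 < n) (k : ℕ) :
    (n : ℤ) * typeInt d n mfun A (k + 1)
      = (bseq d n mfun A k).2 + mfun k - (bseq d n mfun A (k + 1)).2 := by
  have hdvd := (hA.bseq_succ_spec hn (hA.bseq_mem_Bset hn k).1).2.2
  simpa [typeInt] using Int.mul_ediv_cancel' hdvd

lemma IsChart.typeInt_succ_nonneg [NeZero d] (hA : IsChart d n mfun A) (hn : 0 < n) (k : ℕ) :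
    0 ≤ typeInt d n mfun A (k + 1) := by
  have hle := (hA.bseq_succ_spec hn (hA.bseq_mem_Bset hn k).1).2.1
  refine nonneg_of_mul_nonneg_right ?_ (show (0 : ℤ) < n from mod_cast hn)
  linarith [hA.mul_typeInt_succ hn k]

lemma IsChart.mul_sum_typeInt [NeZero d] (hA : IsChart d n mfun A) (hn : 0 < n) (K : ℕ) :
    (n : ℤ) * ∑ j ∈ range K, typeInt d n mfun A (j + 1)
      = (bseq d n mfun A 0).2 + ∑ j ∈ range K, mfun j - (bseq d n mfun A K).2 := by
  induction K with
  | zero => simp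
  | succ K ih =>
    rw [sum_range_succ, sum_range_succ, mul_add, ih, hA.mul_typeInt_succ hn K]
    ring

lemma IsChart.mul_sum_sum_typeTup_ite [NeZero d] (hA : IsChart d n mfun A) (hn : 0 < n)
    {k : ℕ} (hk : k ≤ n) :
    (n : ℤ) * ∑ τ : Fin d, ∑ i : Fin n, (if i.val + 1 ≤ k then typeTup d n mfun A τ i else 0)
      = (bseq d n mfun A 0).2 + k * ∑ τ, mfun τ - (bseq d n mfun A (k * d)).2 := by
  simp only [typeTup]
  rw [sum_fin_sum_fin_ite_le _ hk, hA.mul_sum_typeInt hn, sum_range_mul_natCast_zmod,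
    nsmul_eq_mul]

lemma bseq_mul_fst (k : ℕ) : (bseq d n mfun A (k * d)).1 = 0 := by
  simp

lemma IsChart.bseq_mul_mem_Bset_zero [NeZero d] (hA : IsChart d n mfun A) (hn : 0 < n)
    (k : ℕ) : ((0 : ZMod d), (bseq d n mfun A (k * d)).2) ∈ Bset d n A := by
  rw [← bseq_mul_fst k]
  exact hA.bseq_mem_Bset hn _

lemma IsChart.bseq_zero_snd_le (hA : IsChart d n mfun A) {x : ℤ}
    (hx : ((0 : ZMod d), x) ∈ Bset d n A) : (bseq d n mfun A 0).2 ≤ x := by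
  obtain ⟨c, hc⟩ := hA.2.1
  exact csInf_le ⟨c, fun y hy => hc _ hy.1⟩ hx

lemma IsChart.bseq_mul_snd_eq [NeZero d] (hA : IsChart d n mfun A) (hn : 0 < n) :
    (bseq d n mfun A (n * d)).2 = (bseq d n mfun A 0).2 := by
  have htel := hA.mul_sum_typeInt hn (n * d)
  rw [sum_range_mul_natCast_zmod, nsmul_eq_mul] at htel
  refine eq_of_mem_Bset_of_dvd hA.2.2.2 hn (hA.bseq_mul_mem_Bset_zero hn n)
    (by simpa using hA.bseq_mul_mem_Bset_zero hn 0)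
    ⟨∑ τ, mfun τ - ∑ j ∈ range (n * d), typeInt d n mfun A (j + 1), ?_⟩
  linear_combination htel

end Walk

end ELChart

theorem type_mem_P_general
    (d n m : ℕ) [NeZero d] (hn : 0 < n)
    (mfun : ZMod d → ℤ) (hsum : ∑ τ : ZMod d, mfun τ = (m : ℤ))
    (A : Set (ZMod d × ℤ)) (hA : IsChart d n mfun A) :
    memP d n m (typeTup d n mfun A) := by
  refine ⟨fun τ i => ?_, fun k _ hk => ?_, ?_⟩
  · simpa [typeTup, Nat.add_right_comm] using hA.typeInt_succ_nonneg hn (τ.val + i.val * d)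
  · rw [hA.mul_sum_sum_typeTup_ite hn hk, hsum]
    linarith [hA.bseq_zero_snd_le (hA.bseq_mul_mem_Bset_zero hn k)]
  · have htotal := hA.mul_sum_sum_typeTup_ite hn le_rfl
    simp only [Nat.add_one_le_iff, Fin.is_lt, if_true, hsum, hA.bseq_mul_snd_eq hn] at htotal
    exact mul_left_cancel₀ (show (n : ℤ) ≠ 0 from mod_cast hn.ne') (by linarith)

/-- For every EL-chart `A`, the type of `A` lies in `P_{m,n,d}`: the type
`μ' = (μ'_{τ,i})` satisfies `μ'_{τ,i} ≥ 0` for all `τ, i`, and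
`Σ_{i=1}^k Σ_{τ=1}^d μ'_{τ,i} ≤ k*m/n` for every `k = 1, …, n`, with equality for `k = n`. -/
theorem type_mem_P
    (d n m : ℕ) [NeZero d] (hn : 0 < n) (hm : 0 < m) (hmn : Nat.Coprime m n)
    (mfun : ZMod d → ℤ) (hsum : ∑ τ : ZMod d, mfun τ = (m : ℤ))
    (A : Set (ZMod d × ℤ)) (hA : IsChart d n mfun A) :
    memP d n m (typeTup d n mfun A) :=
  type_mem_P_general d n m hn mfun hsum A hA
end

section
/- For every EL-chart A, the cotype of A lies in P_{m,n,d}, i.e. the cotype μ̃ = (μ̃_{τ,i}) satisfies μ̃_{τ,i} ≥ 0 for all τ, i, and Σ_{i=1}^k Σ_{τ=1}^d μ̃_{τ,i} ≤ km/n for every k = 1,…,n, with equality for k = n. -/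
/-!
Reduction mod `n` identifies every fibre `B_(τ)` with `ℤ/nℤ`: `B_(τ)` consists of the least
elements of `A_(τ)` in each residue class, and every class is met because `f^d` adds
`m = Σ m_τ`, which is prime to `n`. Hence the predecessor map `B_(τ) → B_(τ-1)`,
`b = f q - μ n ↦ q`, is a bijection, and `n μ = q + m_{τ-1} - b`. Summing over the `k` largest
elements `b` of every fibre, the `b`-terms cancel against the `k` largest elements of the
previous fibres, and what remains is `k m` minus the defects `Σ (k largest of B_(τ-1)) - Σ q`.
These are non-negative, since the `k` predecessors are `k` distinct elements of `B_(τ-1)`, and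
vanish for `k = n`, since then the predecessors exhaust `B_(τ-1)`.
-/

/-- The `i`-th largest element of `S`, counted from `0`. -/
noncomputable def nthLargest (S : Set ℤ) (i : ℕ) : ℤ :=
  sInf {y | y ∈ S ∧ {z | z ∈ S ∧ y < z}.ncard = i}

namespace Finset

variable (S : Finset ℤ)

theorem card_filter_lt_lt_card {y : ℤ} (hy : y ∈ S) : #(S.filter (y < ·)) < #S :=
  card_lt_card (filter_ssubset.2 ⟨y, hy, lt_irrefl y⟩)

theorem strictAntiOn_card_filter_lt : StrictAntiOn (fun y => #(S.filter (y < ·))) S := by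
  intro y _ y' hy' hlt
  refine card_lt_card ⟨fun z hz => ?_, fun hsub => ?_⟩
  · simp only [mem_filter] at hz ⊢
    exact ⟨hz.1, hlt.trans hz.2⟩
  · exact lt_irrefl y' (mem_filter.1 (hsub (mem_filter.2 ⟨hy', hlt⟩))).2

theorem nthLargest_spec {i : ℕ} (hi : i < #S) :
    nthLargest S i ∈ S ∧ #(S.filter (nthLargest S i < ·)) = i := by
  have hsurj : Set.SurjOn (fun y => #(S.filter (y < ·))) S (range #S) :=
    surjOn_of_injOn_of_card_le _ (fun y hy => mem_range.2 (S.card_filter_lt_lt_card hy))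
      (S.strictAntiOn_card_filter_lt.injOn) (by simp)
  obtain ⟨y, hyS, hyi⟩ := hsurj (mem_range.2 hi)
  have hset : {y | y ∈ (S : Set ℤ) ∧ {z | z ∈ (S : Set ℤ) ∧ y < z}.ncard = i} = {y} := by
    ext y'
    have hcoe : {z | z ∈ (S : Set ℤ) ∧ y' < z} = ↑(S.filter (y' < ·)) := by ext; simp
    rw [Set.mem_ofPred_eq, hcoe, Set.ncard_coe_finset, mem_coe, Set.mem_singleton_iff]
    refine ⟨fun h => S.strictAntiOn_card_filter_lt.injOn h.1 hyS (h.2.trans hyi.symm),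
      fun h => h ▸ ⟨hyS, hyi⟩⟩
  rw [nthLargest, hset, csInf_singleton]
  exact ⟨hyS, hyi⟩

theorem injOn_nthLargest : Set.InjOn (nthLargest S) (Set.Iio #S) := fun _ hi _ hj h =>
  (S.nthLargest_spec hi).2.symm.trans (h ▸ (S.nthLargest_spec hj).2)

theorem sum_le_sum_range_nthLargest {T : Finset ℤ} (hT : T ⊆ S) :
    ∑ t ∈ T, t ≤ ∑ j ∈ range #T, nthLargest S j := by
  induction h : #T generalizing T with
  | zero => simp_all
  | succ k ih =>
    have hne : T.Nonempty := card_pos.1 (by omega)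
    have hk : k < #S := (card_le_card hT).trans_lt' (by omega)
    -- the `k+1` elements of `T` cannot all exceed the `k`-th largest element of `S`
    have hmin : T.min' hne ≤ nthLargest S k := by
      by_contra! hlt
      have := card_le_card fun t ht =>
        mem_filter.2 ⟨hT ht, hlt.trans_le (T.min'_le t ht)⟩
      have := (S.nthLargest_spec hk).2
      omega
    have herase := ih ((erase_subset _ _).trans hT)
      (by rw [card_erase_of_mem (T.min'_mem hne)]; omega)
    rw [← sum_erase_add T _ (T.min'_mem hne), sum_range_succ]
    omega

theorem sum_range_le_sum_range_nthLargest {h : ℕ → ℤ} {k : ℕ} (hmaps : ∀ j < k, h j ∈ S)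
    (hinj : Set.InjOn h (Set.Iio k)) :
    ∑ j ∈ range k, h j ≤ ∑ j ∈ range k, nthLargest S j := by
  have hinj' : Set.InjOn h (range k) := by simpa using hinj
  have := S.sum_le_sum_range_nthLargest (T := (range k).image h)
    (fun t ht => by obtain ⟨j, hj, rfl⟩ := mem_image.1 ht; exact hmaps j (mem_range.1 hj))
  rwa [sum_image hinj', card_image_of_injOn hinj', card_range] at this

theorem sum_range_eq_sum_of_injOn {M : Type*} [AddCommMonoid M] (S : Finset M) {h : ℕ → M}
    {k : ℕ} (hk : #S = k) (hmaps : ∀ j < k, h j ∈ S) (hinj : Set.InjOn h (Set.Iio k)) :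
    ∑ j ∈ range k, h j = ∑ s ∈ S, s := by
  have hinj' : Set.InjOn h (range k) := by simpa using hinj
  exact sum_nbij h (fun j hj => hmaps j (mem_range.1 hj)) hinj'
    (surjOn_of_injOn_of_card_le h (fun j hj => hmaps j (mem_range.1 hj)) hinj' (by simp [hk]))
    (fun _ _ => rfl)

end Finset

theorem ZMod.sum_fin_natCast {d : ℕ} [NeZero d] {M : Type*} [AddCommMonoid M] (G : ZMod d → M) :
    ∑ τ : Fin d, G τ.val = ∑ σ, G σ := by
  refine Fintype.sum_bijective _ ?_ _ _ fun _ => rfl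
  refine (Fintype.bijective_iff_injective_and_card _).2 ⟨fun τ τ' h => Fin.ext ?_, by simp⟩
  simpa [ZMod.val_natCast_of_lt τ.isLt, ZMod.val_natCast_of_lt τ'.isLt] using congrArg ZMod.val h

namespace ELChart

open Finset

variable {d n : ℕ} {mfun : ZMod d → ℤ} {A : Set (ZMod d × ℤ)}

def Bfiber (d n : ℕ) (A : Set (ZMod d × ℤ)) (τ : ZMod d) : Set ℤ := {y | (τ, y) ∈ Bset d n A}

theorem btilde_succ (τ : ZMod d) (i : ℕ) :
    btilde d n A τ (i + 1) = nthLargest (Bfiber d n A τ) i :=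
  rfl

/-- For `b ∈ B_(σ)`, the element `q ∈ B_(σ-1)` with `b = f q - μ n`, `μ ≥ 0`: the infimum
inside `muOf`. -/
noncomputable def Bpred (d n : ℕ) (mfun : ZMod d → ℤ) (A : Set (ZMod d × ℤ)) (σ : ZMod d)
    (b : ℤ) : ℤ :=
  sInf {y : ℤ | ((σ - 1 : ZMod d), y) ∈ Bset d n A ∧
      (y + mfun (σ - 1) - b) % (n : ℤ) = 0 ∧ b ≤ y + mfun (σ - 1)}

theorem add_mul_mem_of_add_mem {c : ℤ} (hc : ∀ p ∈ A, (p.1, p.2 + c) ∈ A) {τ : ZMod d}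
    {y : ℤ} (h : (τ, y) ∈ A) (k : ℕ) : (τ, y + k * c) ∈ A := by
  induction k with
  | zero => simpa using h
  | succ k ih => simpa [add_mul, add_assoc] using hc _ ih

namespace IsChart

theorem add_mul_mem (hA : IsChart d n mfun A) {τ : ZMod d} {y : ℤ} (h : (τ, y) ∈ A) (k : ℕ) :
    (τ, y + k * n) ∈ A :=
  add_mul_mem_of_add_mem hA.2.2.2 h k

theorem iterate_mem (hA : IsChart d n mfun A) {τ : ZMod d} {y : ℤ} (h : (τ, y) ∈ A) (k : ℕ) :
    (τ + k, y + ∑ j ∈ range k, mfun (τ + j)) ∈ A := by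
  induction k with
  | zero => simpa using h
  | succ k ih => simpa [sum_range_succ, add_assoc] using hA.2.2.1 _ ih

theorem add_sum_mem [NeZero d] (hA : IsChart d n mfun A) {τ : ZMod d} {y : ℤ}
    (h : (τ, y) ∈ A) : (τ, y + ∑ σ, mfun σ) ∈ A := by
  have := hA.iterate_mem h d
  rwa [ZMod.natCast_self, add_zero, ← Fin.sum_univ_eq_sum_range (fun j => mfun (τ + j)),
    ZMod.sum_fin_natCast (fun σ => mfun (τ + σ)),
    Fintype.sum_equiv (Equiv.addLeft τ) (fun σ => mfun (τ + σ)) mfun fun _ => rfl] at this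

theorem exists_mem [NeZero d] (hA : IsChart d n mfun A) (τ : ZMod d) : ∃ y, (τ, y) ∈ A := by
  obtain ⟨⟨σ, y⟩, h⟩ := hA.1
  have := hA.iterate_mem h (τ - σ).val
  rw [ZMod.natCast_zmod_val, add_sub_cancel] at this
  exact ⟨_, this⟩

theorem exists_mem_modEq [NeZero d] (hA : IsChart d n mfun A) (hn : 0 < n)
    (hcop : IsCoprime (∑ σ, mfun σ) n) (τ : ZMod d) (r : ℤ) :
    ∃ y, (τ, y) ∈ A ∧ y ≡ r [ZMOD n] := by
  obtain ⟨y₀, hy₀⟩ := hA.exists_mem τ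
  obtain ⟨u, v, huv⟩ := hcop
  -- add `t` copies of `∑ mfun`, with `t ≡ (r - y₀) u` the Bézout solution
  set t := (r - y₀) * u % n
  have ht : 0 ≤ t := Int.emod_nonneg _ (by positivity)
  refine ⟨_, add_mul_mem_of_add_mem (fun _ => hA.add_sum_mem) hy₀ t.toNat,
    Int.modEq_iff_dvd.2 ⟨(r - y₀) * v + (r - y₀) * u / n * ∑ σ, mfun σ, ?_⟩⟩
  rw [Int.toNat_of_nonneg ht, show t = _ from Int.emod_def _ _]
  linear_combination -(r - y₀) * huv

theorem mem_Bset_iff (hA : IsChart d n mfun A) (hn : 0 < n) {τ : ZMod d} {y : ℤ} :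
    (τ, y) ∈ Bset d n A ↔ (τ, y) ∈ A ∧ ∀ y', (τ, y') ∈ A → y' ≡ y [ZMOD n] → y ≤ y' := by
  constructor
  · rintro ⟨hy, hyn⟩
    refine ⟨hy, fun y' hy' hmod => ?_⟩
    by_contra! hlt
    obtain ⟨c, hc⟩ := Int.modEq_iff_dvd.1 hmod
    have hc1 : 0 ≤ c - 1 := by nlinarith
    have := hA.add_mul_mem hy' (c - 1).toNat
    rw [Int.toNat_of_nonneg hc1, show y' + (c - 1) * n = y - n by linarith] at this
    exact hyn this
  · rintro ⟨hy, hmin⟩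
    refine ⟨hy, fun h => ?_⟩
    have := hmin _ h (Int.modEq_iff_dvd.2 ⟨1, by ring⟩)
    omega

theorem eq_of_mem_Bset_of_modEq (hA : IsChart d n mfun A) (hn : 0 < n) {τ : ZMod d} {y y' : ℤ}
    (hy : (τ, y) ∈ Bset d n A) (hy' : (τ, y') ∈ Bset d n A) (h : y ≡ y' [ZMOD n]) : y = y' :=
  le_antisymm (((hA.mem_Bset_iff hn).1 hy).2 _ ((hA.mem_Bset_iff hn).1 hy').1 h.symm)
    (((hA.mem_Bset_iff hn).1 hy').2 _ ((hA.mem_Bset_iff hn).1 hy).1 h)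

theorem exists_mem_Bset_modEq [NeZero d] (hA : IsChart d n mfun A) (hn : 0 < n)
    (hcop : IsCoprime (∑ σ, mfun σ) n) (τ : ZMod d) (r : ℤ) :
    ∃ y, (τ, y) ∈ Bset d n A ∧ y ≡ r [ZMOD n] := by
  obtain ⟨y₀, hy₀⟩ := hA.exists_mem_modEq hn hcop τ r
  obtain ⟨c, hc⟩ := hA.2.1
  obtain ⟨y, ⟨hyA, hy⟩, hleast⟩ := Int.exists_least_of_bdd
    (P := fun y => (τ, y) ∈ A ∧ y ≡ r [ZMOD n]) ⟨c, fun z hz => hc _ hz.1⟩ ⟨y₀, hy₀⟩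
  exact ⟨y, (hA.mem_Bset_iff hn).2 ⟨hyA, fun y' hy' hmod => hleast y' ⟨hy', hmod.trans hy⟩⟩, hy⟩

theorem exists_finset_eq_Bfiber [NeZero d] (hA : IsChart d n mfun A) (hn : 0 < n)
    (hcop : IsCoprime (∑ σ, mfun σ) n) (τ : ZMod d) :
    ∃ S : Finset ℤ, (S : Set ℤ) = Bfiber d n A τ ∧ #S = n := by
  have : NeZero n := ⟨hn.ne'⟩
  have hbij : Set.BijOn ((↑) : ℤ → ZMod n) (Bfiber d n A τ) Set.univ := by
    refine ⟨Set.mapsTo_univ _ _, fun y hy y' hy' h => hA.eq_of_mem_Bset_of_modEq hn hy hy'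
      ((ZMod.intCast_eq_intCast_iff _ _ _).1 h), fun a _ => ?_⟩
    obtain ⟨r, rfl⟩ := ZMod.intCast_surjective a
    obtain ⟨y, hy, hmod⟩ := hA.exists_mem_Bset_modEq hn hcop τ r
    exact ⟨y, hy, (ZMod.intCast_eq_intCast_iff _ _ _).2 hmod⟩
  have hfin : (Bfiber d n A τ).Finite :=
    Set.Finite.of_finite_image (hbij.image_eq ▸ Set.finite_univ) hbij.injOn
  refine ⟨hfin.toFinset, hfin.coe_toFinset, ?_⟩
  rw [← Set.ncard_eq_toFinset_card _ hfin, hbij.ncard_eq, Set.ncard_univ, Nat.card_zmod]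

theorem Bpred_spec [NeZero d] (hA : IsChart d n mfun A) (hn : 0 < n)
    (hcop : IsCoprime (∑ σ, mfun σ) n) {σ : ZMod d} {b : ℤ} (hb : b ∈ Bfiber d n A σ) :
    Bpred d n mfun A σ b ∈ Bfiber d n A (σ - 1) ∧
      Bpred d n mfun A σ b + mfun (σ - 1) ≡ b [ZMOD n] ∧
      b ≤ Bpred d n mfun A σ b + mfun (σ - 1) := by
  obtain ⟨q, hq, hmod⟩ := hA.exists_mem_Bset_modEq hn hcop (σ - 1) (b - mfun (σ - 1))
  replace hmod : q + mfun (σ - 1) ≡ b [ZMOD n] := by simpa using hmod.add_right (mfun (σ - 1))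
  have hle : b ≤ q + mfun (σ - 1) :=
    ((hA.mem_Bset_iff hn).1 hb).2 _ (by simpa using hA.2.2.1 _ hq.1) hmod
  have hset : {y : ℤ | ((σ - 1 : ZMod d), y) ∈ Bset d n A ∧
      (y + mfun (σ - 1) - b) % (n : ℤ) = 0 ∧ b ≤ y + mfun (σ - 1)} = {q} := by
    ext y
    simp only [Set.mem_ofPred_eq, Set.mem_singleton_iff, ← Int.dvd_iff_emod_eq_zero,
      ← Int.modEq_iff_dvd]
    refine ⟨fun ⟨hy, hymod, _⟩ => hA.eq_of_mem_Bset_of_modEq hn hy hq ?_,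
      fun h => h ▸ ⟨hq, hmod.symm, hle⟩⟩
    simpa using (hymod.symm.trans hmod.symm).add_right (-mfun (σ - 1))
  rw [Bpred, hset, csInf_singleton]
  exact ⟨hq, hmod, hle⟩

theorem n_mul_muOf [NeZero d] (hA : IsChart d n mfun A) (hn : 0 < n)
    (hcop : IsCoprime (∑ σ, mfun σ) n) {σ : ZMod d} {b : ℤ} (hb : b ∈ Bfiber d n A σ) :
    n * muOf d n mfun A (σ, b) = Bpred d n mfun A σ b + mfun (σ - 1) - b :=
  Int.mul_ediv_cancel' (Int.ModEq.dvd (hA.Bpred_spec hn hcop hb).2.1.symm)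

theorem muOf_nonneg [NeZero d] (hA : IsChart d n mfun A) (hn : 0 < n)
    (hcop : IsCoprime (∑ σ, mfun σ) n) {σ : ZMod d} {b : ℤ} (hb : b ∈ Bfiber d n A σ) :
    0 ≤ muOf d n mfun A (σ, b) :=
  Int.ediv_nonneg (sub_nonneg.2 (hA.Bpred_spec hn hcop hb).2.2) n.cast_nonneg

theorem injOn_Bpred [NeZero d] (hA : IsChart d n mfun A) (hn : 0 < n)
    (hcop : IsCoprime (∑ σ, mfun σ) n) (σ : ZMod d) :
    Set.InjOn (Bpred d n mfun A σ) (Bfiber d n A σ) := fun _ hb _ hb' h =>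
  hA.eq_of_mem_Bset_of_modEq hn hb hb'
    (((hA.Bpred_spec hn hcop hb).2.1.symm.trans (h ▸ (hA.Bpred_spec hn hcop hb').2.1)))

theorem mapsTo_nthLargest_Bfiber [NeZero d] (hA : IsChart d n mfun A) (hn : 0 < n)
    (hcop : IsCoprime (∑ σ, mfun σ) n) (σ : ZMod d) :
    Set.MapsTo (nthLargest (Bfiber d n A σ)) (Set.Iio n) (Bfiber d n A σ) := by
  obtain ⟨S, hS, hcard⟩ := hA.exists_finset_eq_Bfiber hn hcop σ
  rw [← hS]
  exact fun j hj => (S.nthLargest_spec (hcard ▸ hj)).1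

theorem injOn_nthLargest_Bfiber [NeZero d] (hA : IsChart d n mfun A) (hn : 0 < n)
    (hcop : IsCoprime (∑ σ, mfun σ) n) (σ : ZMod d) :
    Set.InjOn (nthLargest (Bfiber d n A σ)) (Set.Iio n) := by
  obtain ⟨S, hS, hcard⟩ := hA.exists_finset_eq_Bfiber hn hcop σ
  rw [← hS, ← hcard]
  exact S.injOn_nthLargest

theorem mapsTo_Bpred_nthLargest [NeZero d] (hA : IsChart d n mfun A) (hn : 0 < n)
    (hcop : IsCoprime (∑ σ, mfun σ) n) (σ : ZMod d) :
    Set.MapsTo (Bpred d n mfun A σ ∘ nthLargest (Bfiber d n A σ)) (Set.Iio n)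
      (Bfiber d n A (σ - 1)) := fun _ hj =>
  (hA.Bpred_spec hn hcop (hA.mapsTo_nthLargest_Bfiber hn hcop σ hj)).1

theorem injOn_Bpred_nthLargest [NeZero d] (hA : IsChart d n mfun A) (hn : 0 < n)
    (hcop : IsCoprime (∑ σ, mfun σ) n) (σ : ZMod d) :
    Set.InjOn (Bpred d n mfun A σ ∘ nthLargest (Bfiber d n A σ)) (Set.Iio n) :=
  (hA.injOn_Bpred hn hcop σ).comp (hA.injOn_nthLargest_Bfiber hn hcop σ)
    (hA.mapsTo_nthLargest_Bfiber hn hcop σ)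

theorem sum_Bpred_nthLargest_le [NeZero d] (hA : IsChart d n mfun A) (hn : 0 < n)
    (hcop : IsCoprime (∑ σ, mfun σ) n) (σ : ZMod d) {k : ℕ} (hk : k ≤ n) :
    ∑ j ∈ range k, Bpred d n mfun A σ (nthLargest (Bfiber d n A σ) j)
      ≤ ∑ j ∈ range k, nthLargest (Bfiber d n A (σ - 1)) j := by
  obtain ⟨S, hS, -⟩ := hA.exists_finset_eq_Bfiber hn hcop (σ - 1)
  have hmaps := hA.mapsTo_Bpred_nthLargest hn hcop σ
  rw [← hS] at hmaps ⊢
  exact S.sum_range_le_sum_range_nthLargest (fun j hj => hmaps (hj.trans_le hk))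
    ((hA.injOn_Bpred_nthLargest hn hcop σ).mono fun j hj => hj.trans_le hk)

theorem sum_Bpred_nthLargest_eq [NeZero d] (hA : IsChart d n mfun A) (hn : 0 < n)
    (hcop : IsCoprime (∑ σ, mfun σ) n) (σ : ZMod d) :
    ∑ j ∈ range n, Bpred d n mfun A σ (nthLargest (Bfiber d n A σ) j)
      = ∑ j ∈ range n, nthLargest (Bfiber d n A (σ - 1)) j := by
  obtain ⟨S, hS, hcard⟩ := hA.exists_finset_eq_Bfiber hn hcop (σ - 1)
  have hmaps := hA.mapsTo_Bpred_nthLargest hn hcop σ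
  have hmaps' := hA.mapsTo_nthLargest_Bfiber hn hcop (σ - 1)
  have hinj' := hA.injOn_nthLargest_Bfiber hn hcop (σ - 1)
  rw [← hS] at hmaps hmaps' hinj' ⊢
  rw [S.sum_range_eq_sum_of_injOn (h := fun j => Bpred d n mfun A σ (nthLargest _ j)) hcard
      (fun j hj => hmaps hj) (hA.injOn_Bpred_nthLargest hn hcop σ),
    S.sum_range_eq_sum_of_injOn hcard (fun j hj => hmaps' hj) hinj']

theorem n_mul_sum_muOf [NeZero d] (hA : IsChart d n mfun A) (hn : 0 < n)
    (hcop : IsCoprime (∑ σ, mfun σ) n) {k : ℕ} (hk : k ≤ n) :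
    n * ∑ σ, ∑ j ∈ range k, muOf d n mfun A (σ, nthLargest (Bfiber d n A σ) j)
      = k * ∑ σ, mfun σ - ∑ σ, (∑ j ∈ range k, nthLargest (Bfiber d n A (σ - 1)) j
        - ∑ j ∈ range k, Bpred d n mfun A σ (nthLargest (Bfiber d n A σ) j)) := by
  simp_rw [mul_sum]
  rw [sum_congr rfl fun σ _ => sum_congr rfl fun j hj => hA.n_mul_muOf hn hcop
    (hA.mapsTo_nthLargest_Bfiber hn hcop σ (Set.mem_Iio.2 ((mem_range.1 hj).trans_le hk)))]
  simp only [sum_sub_distrib, sum_add_distrib, sum_const, card_range, nsmul_eq_mul, ← mul_sum]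
  rw [Fintype.sum_equiv (Equiv.subRight 1) (fun σ => mfun (σ - 1)) mfun fun _ => rfl,
    Fintype.sum_equiv (Equiv.subRight 1)
      (fun σ => ∑ j ∈ range k, nthLargest (Bfiber d n A (σ - 1)) j)
      (fun σ => ∑ j ∈ range k, nthLargest (Bfiber d n A σ) j) fun _ => rfl]
  ring

end IsChart

theorem sum_cotypeTup_ite [NeZero d] {k : ℕ} (hk : k ≤ n) :
    ∑ τ : Fin d, ∑ i : Fin n, (if i.val + 1 ≤ k then cotypeTup d n mfun A τ i else 0)
      = ∑ σ, ∑ j ∈ range k, muOf d n mfun A (σ, nthLargest (Bfiber d n A σ) j) := by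
  have hrange : (range n).filter (· + 1 ≤ k) = range k := by
    ext j; simp only [mem_filter, mem_range]; omega
  let G : ZMod d → ℤ := fun σ => ∑ i : Fin n,
    if i.val + 1 ≤ k then muOf d n mfun A (σ, nthLargest (Bfiber d n A σ) i) else 0
  simp only [cotypeTup, btilde_succ, Nat.cast_succ]
  calc _ = ∑ σ, G (σ + 1) := ZMod.sum_fin_natCast fun σ => G (σ + 1)
    _ = ∑ σ, G σ := Fintype.sum_equiv (Equiv.addRight 1) _ _ fun _ => rfl
    _ = _ := sum_congr rfl fun σ _ => by
      dsimp only [G]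
      rw [Fin.sum_univ_eq_sum_range (fun j => if j + 1 ≤ k then
        muOf d n mfun A (σ, nthLargest (Bfiber d n A σ) j) else 0), ← sum_filter, hrange]

end ELChart

open ELChart

theorem cotype_mem_P_general
    (d n m : ℕ) [NeZero d] (hn : 0 < n) (hmn : Nat.Coprime m n)
    (mfun : ZMod d → ℤ) (hsum : ∑ τ : ZMod d, mfun τ = (m : ℤ))
    (A : Set (ZMod d × ℤ)) (hA : IsChart d n mfun A) :
    memP d n m (cotypeTup d n mfun A) := by
  have hcop : IsCoprime (∑ σ, mfun σ) n := hsum ▸ Nat.isCoprime_iff_coprime.2 hmn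
  refine ⟨fun τ i => hA.muOf_nonneg hn hcop (hA.mapsTo_nthLargest_Bfiber hn hcop _ i.isLt),
    fun k _ hk => ?_, ?_⟩
  · have hdefect := Finset.sum_nonneg fun σ (_ : σ ∈ Finset.univ) =>
      sub_nonneg.2 (hA.sum_Bpred_nthLargest_le hn hcop σ hk)
    rw [sum_cotypeTup_ite hk, hA.n_mul_sum_muOf hn hcop hk, hsum]
    linarith
  · have htotal := hA.n_mul_sum_muOf hn hcop le_rfl
    simp only [hA.sum_Bpred_nthLargest_eq hn hcop, sub_self, Finset.sum_const_zero, sub_zero,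
      hsum, ← sum_cotypeTup_ite le_rfl, Nat.succ_le_of_lt (Fin.isLt _), if_true] at htotal
    exact mul_left_cancel₀ (by positivity) htotal

/-- For every EL-chart `A`, the cotype of `A` lies in `P_{m,n,d}`: the
cotype `μ̃ = (μ̃_{τ,i})` satisfies `μ̃_{τ,i} ≥ 0` for all `τ, i`, and
`Σ_{i=1}^k Σ_{τ=1}^d μ̃_{τ,i} ≤ k*m/n` for every `k = 1, …, n`, with equality for `k = n`. -/
theorem cotype_mem_P
    (d n m : ℕ) [NeZero d] (hn : 0 < n) (hm : 0 < m) (hmn : Nat.Coprime m n)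
    (mfun : ZMod d → ℤ) (hsum : ∑ τ : ZMod d, mfun τ = (m : ℤ))
    (A : Set (ZMod d × ℤ)) (hA : IsChart d n mfun A) :
    memP d n m (cotypeTup d n mfun A) :=
  cotype_mem_P_general d n m hn hmn mfun hsum A hA
end

section
/- Suppose d = 1 (so an EL-chart is a semi-module: a non-empty subset A ⊆ ℤ bounded below with A + m ⊆ A and A + n ⊆ A). Let A be a semi-module with type μ' = (μ'_1,…,μ'_n) and cotype μ̃ = (μ̃_1,…,μ̃_n), and define the word w by w_k = m − n·μ'_k for k = 1,…,n. Then all levels of w are non-negative; in fact l(w)_k = b_k − b_0 for k = 1,…,n, where b_0,…,b_n is the sequence from the type construction. Moreover μ̃_k = (m − sw(w)_k)/n for every k = 1,…,n, where sw is the sweep map on rearrangements of the letters of w. -/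
namespace Sweep

/-- Index of the letter of the subword `τ+1` (for `τ : Fin d`) at place `i+1` (for `i : Fin n`)
inside a word of length `d * n` with interlaced subwords. -/
abbrev Idx (d n : ℕ) := Fin d × Fin n

/-- The (0-indexed) global position of the letter `p` in the word; the letter `(τ, i)` is the
`(g p + 1)`-st letter of the word. -/
def g {d n : ℕ} (p : Idx d n) : ℕ := p.2.val * d + p.1.val

/-- The level of the word `w` at the position `p`: the sum of all letters up to (and
including) `p`. -/
def lev {d n : ℕ} (w : Idx d n → ℤ) (p : Idx d n) : ℤ :=
  ∑ q : Idx d n, if g q ≤ g p then w q else 0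

/-- The reading order on level values used by the sweep map: `a` is read before `b` when,
running first from `-1` down through all negative integers and then from `+∞` down to `0`,
the value `a` occurs before the value `b`. -/
def sweepBefore (a b : ℤ) : Bool :=
  (decide (a < 0) && decide (0 ≤ b)) ||
    ((decide (a < 0) == decide (b < 0)) && decide (b < a))

/-- The reading order on positions of the word `w` used by the sweep map: positions are read
according to the reading order of their levels (`sweepBefore`), positions of equal level being
read from right to left. -/
def readLE {d n : ℕ} (w : Idx d n → ℤ) (p q : Idx d n) : Bool :=
  sweepBefore (lev w p) (lev w q) ||
    (decide (lev w p = lev w q) && decide (g q ≤ g p))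

/-- The list of all positions of the word. -/
def allIdx (d n : ℕ) : List (Idx d n) :=
  (List.finRange d).flatMap fun τ => (List.finRange n).map fun i => (τ, i)

/-- The generalised sweep map with components given by the fibres of `c` : each fibre of `c`
(a "subword") is rearranged according to the reading order `readLE` of the positions.
Taking `c p = p.1.val` gives the `d`-component sweep map `sw⁽ᵈ⁾`, and taking `c = 0`
gives the classical (one-component) sweep map `sw`. -/
def sweepGen {d n : ℕ} (c : Idx d n → ℕ) (w : Idx d n → ℤ) : Idx d n → ℤ := fun p =>
  let cls := (allIdx d n).filter fun q => c q == c p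
  let sorted := cls.mergeSort fun q r => readLE w q r
  let rank := (cls.filter fun q => decide (g q < g p)).length
  w (sorted.getD rank p)

/-- The set `𝒜_ℤ^(d)` of words whose `τ`-th subword is a rearrangement of
`a τ 0, …, a τ (n-1)`. -/
def AZ {d n : ℕ} (a : Fin d → Fin n → ℤ) : Set (Idx d n → ℤ) :=
  {w | ∀ τ : Fin d, ∃ e : Equiv.Perm (Fin n), ∀ i : Fin n, w (τ, i) = a τ (e i)}

/-- A word is a `d`-component Dyck word if its level at every position that is a multiple of
`d` (1-indexed) is non-negative. -/
def IsDyckD {d n : ℕ} (w : Idx d n → ℤ) : Prop :=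
  ∀ p : Idx d n, (g p + 1) % d = 0 → 0 ≤ lev w p

/-- The word `w^{+N}`: add `N` to every letter whose (1-indexed) position is not a multiple
of `d`, and subtract `(d-1) * N` from every letter whose position is a multiple of `d`. -/
def plusN {d n : ℕ} (N : ℤ) (w : Idx d n → ℤ) : Idx d n → ℤ := fun p =>
  if (g p + 1) % d = 0 then w p - ((d : ℤ) - 1) * N else w p + N

end Sweep


namespace Sweep

lemma sweepBefore_iff (a b : ℤ) :
    sweepBefore a b = true ↔ ((a < 0 ∧ 0 ≤ b) ∨ (((a < 0) ↔ (b < 0)) ∧ b < a)) := by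
  simp [sweepBefore, Bool.or_eq_true, Bool.and_eq_true, decide_eq_true_eq, beq_iff_eq,
    decide_eq_decide]

lemma readLE_iff {d n : ℕ} (w : Idx d n → ℤ) (p q : Idx d n) :
    readLE w p q = true ↔
      ((lev w p < 0 ∧ 0 ≤ lev w q) ∨ (((lev w p < 0) ↔ (lev w q < 0)) ∧ lev w q < lev w p)
        ∨ (lev w p = lev w q ∧ g q ≤ g p)) := by
  unfold readLE
  generalize lev w p = a
  generalize lev w q = b
  rw [Bool.or_eq_true, Bool.and_eq_true, sweepBefore_iff, decide_eq_true_eq, decide_eq_true_eq]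
  omega

lemma readLE_trans {d n : ℕ} (w : Idx d n → ℤ) (p q r : Idx d n)
    (h1 : readLE w p q = true) (h2 : readLE w q r = true) : readLE w p r = true := by
  rw [readLE_iff] at h1 h2 ⊢; omega

lemma readLE_total {d n : ℕ} (w : Idx d n → ℤ) (p q : Idx d n) :
    (readLE w p q || readLE w q p) = true := by
  rw [Bool.or_eq_true, readLE_iff, readLE_iff]; omega

lemma idx_eq_of_g {n : ℕ} (p q : Idx 1 n) (h : g p = g q) : p = q := by
  have h1 : p.1 = q.1 := Subsingleton.elim _ _
  have hp : p.1.val = 0 := by omega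
  have hq : q.1.val = 0 := by omega
  have h2 : p.2.val = q.2.val := by simp [g, hp, hq] at h; omega
  exact Prod.ext h1 (Fin.ext h2)

lemma g_one {n : ℕ} (p : Idx 1 n) : g p = p.2.val := by
  have hp : p.1.val = 0 := by omega
  simp [g, hp]

lemma readLE_antisymm {n : ℕ} (w : Idx 1 n → ℤ) (p q : Idx 1 n)
    (h1 : readLE w p q = true) (h2 : readLE w q p = true) : p = q := by
  rw [readLE_iff] at h1 h2
  exact idx_eq_of_g p q (by omega)

lemma countP_range_lt (n r : ℕ) : ((List.range n).countP fun v => decide (v < r)) = min r n := by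
  induction n with
  | zero => simp
  | succ k ih =>
    rw [List.range_succ, List.countP_append, ih]
    by_cases h : k < r
    · simp [List.countP_cons, List.countP_nil, h]; omega
    · simp [List.countP_cons, List.countP_nil, h]; omega

lemma allIdx_one (n : ℕ) : allIdx 1 n = (List.finRange n).map fun i => ((0 : Fin 1), i) := by
  simp [allIdx, List.finRange_succ]

lemma mem_allIdx_one {n : ℕ} (x : Idx 1 n) : x ∈ allIdx 1 n := by
  rw [allIdx_one]
  rw [List.mem_map]
  exact ⟨x.2, List.mem_finRange _, Prod.ext (Subsingleton.elim _ _) rfl⟩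

lemma length_allIdx_one (n : ℕ) : (allIdx 1 n).length = n := by
  rw [allIdx_one]; simp

end Sweep

open Sweep

/-- A semi-module for coprime `m, n`: a non-empty subset `A ⊆ ℤ`, bounded below, with
`A + m ⊆ A` and `A + n ⊆ A` (the case `d = 1` of EL-charts, with `f a = a + m`). -/
def IsSemiModule (n m : ℕ) (A : Set ℤ) : Prop :=
  A.Nonempty ∧ (∃ c : ℤ, ∀ x ∈ A, c ≤ x) ∧
    (∀ x ∈ A, x + (m : ℤ) ∈ A) ∧ (∀ x ∈ A, x + (n : ℤ) ∈ A)

/-- `B = A ∖ (A + n)` for a semi-module `A ⊆ ℤ`. -/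
def BsetZ (n : ℕ) (A : Set ℤ) : Set ℤ := {x | x ∈ A ∧ x - (n : ℤ) ∉ A}

/-- (`d = 1`.)  Let `A` be a semi-module with type `μ' = (μ'_1, …, μ'_n)`
and cotype `μ̃ = (μ̃_1, …, μ̃_n)`, and define the word `w` by `w k = m − n * μ'_k` for
`k = 1, …, n`.  Then all levels of `w` are non-negative; in fact `lev w k = b k − b 0` for
`k = 1, …, n`, where `b 0, …, b n` is the sequence from the type construction.  Moreover
`μ̃_k = (m − sw(w)_k) / n` for every `k = 1, …, n`, where `sw` is the sweep map. -/
theorem semimodule_type_word_levels_and_cotype_via_sweep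
    (n m : ℕ) (hn : 0 < n) (hm : 0 < m) (hmn : Nat.Coprime m n)
    (A : Set ℤ) (hA : IsSemiModule n m A)
    -- the sequence `b` and the type `μ'` of `A`:
    (b : ℕ → ℤ) (mu : ℕ → ℤ)
    (hb0mem : b 0 ∈ BsetZ n A) (hb0min : ∀ x ∈ BsetZ n A, b 0 ≤ x)
    (hrec : ∀ i : ℕ, b (i + 1) ∈ BsetZ n A ∧ 0 ≤ mu (i + 1) ∧
      b (i + 1) = b i + (m : ℤ) - mu (i + 1) * (n : ℤ))
    -- the decreasing enumeration `b̃` of `B` and the cotype `μ̃` of `A`: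
    (btil : ℕ → ℤ) (mt : ℕ → ℤ)
    (hbtmem : ∀ i : ℕ, 1 ≤ i → i ≤ n → btil i ∈ BsetZ n A)
    (hbtdec : ∀ i j : ℕ, 1 ≤ i → i < j → j ≤ n → btil j < btil i)
    (hbtall : ∀ x ∈ BsetZ n A, ∃ i : ℕ, 1 ≤ i ∧ i ≤ n ∧ btil i = x)
    (hmt : ∀ i : ℕ, 1 ≤ i → i ≤ n →
      ∃ i' : ℕ, 1 ≤ i' ∧ i' ≤ n ∧ btil i = b i' ∧ mt i = mu i')
    -- the word `w`, with `w k = m − n·μ'_k`: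
    (w : Idx 1 n → ℤ) (hw : ∀ p : Idx 1 n, w p = (m : ℤ) - (n : ℤ) * mu (p.2.val + 1)) :
    (∀ p : Idx 1 n, lev w p = b (p.2.val + 1) - b 0) ∧
    (∀ p : Idx 1 n, 0 ≤ lev w p) ∧
    (∀ i : ℕ, ∀ h1 : 1 ≤ i, ∀ h2 : i ≤ n,
      (m : ℤ) - (n : ℤ) * mt i =
        sweepGen (fun _ : Idx 1 n => 0) w ((0 : Fin 1), ⟨i - 1, by omega⟩)) := by
  -- the levels of w, as partial sums
  have hlev : ∀ p : Idx 1 n, lev w p =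
      ∑ k ∈ Finset.range (p.2.val + 1), ((m : ℤ) - (n : ℤ) * mu (k + 1)) := by
    intro p
    rw [lev, Fintype.sum_prod_type, Fin.sum_univ_one]
    have e1 : ∀ i : Fin n, (if g ((0 : Fin 1), i) ≤ g p then w ((0 : Fin 1), i) else 0)
        = (fun k : ℕ => if k ≤ p.2.val then ((m : ℤ) - (n : ℤ) * mu (k + 1)) else 0) i.val := by
      intro i
      simp only [g_one, hw]
    rw [Finset.sum_congr rfl fun i _ => e1 i]
    rw [Fin.sum_univ_eq_sum_range (fun k : ℕ => if k ≤ p.2.val then ((m : ℤ) - (n : ℤ) * mu (k + 1)) else 0) n]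
    rw [← Finset.sum_filter]
    congr 1
    ext k
    simp only [Finset.mem_filter, Finset.mem_range]
    have := p.2.isLt
    omega
  have hbsum : ∀ j : ℕ, b j - b 0 = ∑ k ∈ Finset.range j, ((m : ℤ) - (n : ℤ) * mu (k + 1)) := by
    intro j
    induction j with
    | zero => simp
    | succ j ih =>
      rw [Finset.sum_range_succ, ← ih, (hrec j).2.2]
      ring
  have part1 : ∀ p : Idx 1 n, lev w p = b (p.2.val + 1) - b 0 := by
    intro p; rw [hlev p, hbsum]
  have part2 : ∀ p : Idx 1 n, 0 ≤ lev w p := by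
    intro p
    rw [part1]
    have h := hb0min _ (hrec p.2.val).1
    omega
  refine ⟨part1, part2, ?_⟩
  intro i h1 h2
  set p : Idx 1 n := ((0 : Fin 1), ⟨i - 1, by omega⟩) with hpdef
  choose idx hidx1 hidx2 hidx3 hidx4 using fun k : Fin n => hmt (k.val + 1) (by omega) k.isLt
  let σ : Fin n → Idx 1 n := fun k =>
    ((0 : Fin 1), ⟨idx k - 1, by have := hidx1 k; have := hidx2 k; omega⟩)
  have hσ2 : ∀ k : Fin n, (σ k).2.val = idx k - 1 := fun k => rfl
  have hlevσ : ∀ k : Fin n, lev w (σ k) = btil (k.val + 1) - b 0 := by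
    intro k
    rw [part1, hσ2 k]
    have h1 := hidx1 k
    have e : idx k - 1 + 1 = idx k := by omega
    rw [e, ← hidx3 k]
  have hinj : Function.Injective σ := by
    intro j k hjk
    have e0 : idx j - 1 = idx k - 1 := congrArg (fun q : Idx 1 n => q.2.val) hjk
    have hj1 := hidx1 j
    have hk1 := hidx1 k
    have e1 : idx j = idx k := by omega
    have hb : btil (j.val + 1) = btil (k.val + 1) := by rw [hidx3 j, hidx3 k, e1]
    by_contra hne
    have hne' : j.val ≠ k.val := fun h => hne (Fin.ext h)
    rcases Nat.lt_or_ge j.val k.val with h | h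
    · have := hbtdec (j.val + 1) (k.val + 1) (by omega) (by omega) k.isLt
      omega
    · have := hbtdec (k.val + 1) (j.val + 1) (by omega) (by omega) j.isLt
      omega
  set L : List (Idx 1 n) := (List.finRange n).map σ with hL
  have hlenL : L.length = n := by simp [hL]
  have hperm : L.Perm (allIdx 1 n) := by
    refine (List.subperm_of_subset ((List.nodup_finRange n).map hinj) ?_).perm_of_length_le ?_
    · intro x _
      exact mem_allIdx_one x
    · rw [hlenL, length_allIdx_one]
  have hsortL : List.Pairwise (fun a b => readLE w a b = true) L := by
    rw [hL, List.pairwise_map]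
    refine (List.pairwise_lt_finRange n).imp ?_
    intro j k hjk
    rw [readLE_iff]
    have h2 := part2 (σ j)
    have h3 := part2 (σ k)
    have hlt : lev w (σ k) < lev w (σ j) := by
      rw [hlevσ, hlevσ]
      have := hbtdec (j.val + 1) (k.val + 1) (by omega) (by omega) k.isLt
      omega
    omega
  have hms_eq : (allIdx 1 n).mergeSort (fun q r => readLE w q r) = L := by
    haveI : IsAntisymm (Idx 1 n) (fun a b => readLE w a b = true) :=
      ⟨fun a b => readLE_antisymm w a b⟩
    exact List.Perm.eq_of_pairwise (fun a b _ _ h1 h2 => readLE_antisymm w a b h1 h2)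
      (List.pairwise_mergeSort (readLE_trans w) (readLE_total w) _) hsortL
      (((allIdx 1 n).mergeSort_perm _).trans hperm.symm)
  have hrank : ((allIdx 1 n).filter fun q => decide (g q < g p)).length = i - 1 := by
    rw [allIdx_one, ← List.countP_eq_length_filter, List.countP_map]
    have e1 : ((List.finRange n).countP ((fun q : Idx 1 n => decide (g q < g p)) ∘ fun k => ((0 : Fin 1), k)))
        = (List.finRange n).countP fun k : Fin n => decide (k.val < i - 1) := by
      refine List.countP_congr ?_
      intro k _
      simp only [Function.comp, g_one, hpdef]
    rw [e1]
    have e2 : ((List.finRange n).countP fun k : Fin n => decide (k.val < i - 1))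
        = (List.range n).countP fun v => decide (v < i - 1) := by
      rw [← (show (List.finRange n).map Fin.val = List.range n from
        List.ext_getElem (by simp) (by simp)), List.countP_map]
      rfl
    rw [e2, countP_range_lt]
    omega
  have hfil : ((allIdx 1 n).filter fun q => (fun _ : Idx 1 n => (0 : ℕ)) q == (fun _ : Idx 1 n => (0 : ℕ)) p) = allIdx 1 n := by
    simp
  have hgetD : L.getD (i - 1) p = σ ⟨i - 1, by omega⟩ := by
    have hlt : i - 1 < L.length := by omega
    rw [List.getD_eq_getElem L p hlt]
    simp [hL]
  rw [sweepGen]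
  simp only [hfil, hms_eq, hrank, hgetD]
  have hwσ : w (σ ⟨i - 1, by omega⟩) = (m : ℤ) - (n : ℤ) * mt i := by
    rw [hw]
    have k : Fin n := ⟨i - 1, by omega⟩
    have h1 := hidx1 (⟨i - 1, by omega⟩ : Fin n)
    have e : (σ (⟨i - 1, by omega⟩ : Fin n)).2.val + 1 = idx ⟨i - 1, by omega⟩ := by
      rw [hσ2]; omega
    rw [e, ← hidx4]
    have : (⟨i - 1, by omega⟩ : Fin n).val + 1 = i := by simp; omega
    rw [this]
  rw [hwσ]
end
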